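/- Fix Σ₀ positive definite, w ≠ 0, T ∈ ℝ, and ε ∈ (0, 1/2). Let δ₀ = (T - wᵀμ₀)/sqrt(wᵀΣ₀w) and suppose δ₀ < Φ⁻¹(1-ε). Among Gaussian posteriors p = N(μ₀ + Δ, Σ₀) with mean shift Δ satisfying P_p(wᵀs ≤ T) ≥ 1-ε, the minimum of D_KL(p ‖ p₀) = (1/2)ΔᵀΣ₀⁻¹Δ equals (1/2)(Φ⁻¹(1-ε) - δ₀)², achieved by Δ* = -(Φ⁻¹(1-ε) - δ₀)·Σ₀w/sqrt(wᵀΣ₀w). -/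

import Mathlib

open MeasureTheory Real Matrix
noncomputable section

/-- Density of the multivariate Gaussian `N(m, Σ)` on `ℝ^d`. -/
def gaussDensity {d : ℕ} (m : Fin d → ℝ) (Sig : Matrix (Fin d) (Fin d) ℝ) (s : Fin d → ℝ) : ℝ :=
  (Real.sqrt ((2 * π) ^ d * Sig.det))⁻¹ *
    Real.exp (-(1 / 2) * ((s - m) ⬝ᵥ (Sig⁻¹ *ᵥ (s - m))))

/-- Standard normal cumulative distribution function. -/
def stdNormalCDF (x : ℝ) : ℝ :=
  ∫ t in Set.Iic x, (Real.sqrt (2 * π))⁻¹ * Real.exp (-t ^ 2 / 2)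

/-!
Write `S = B Bᵀ`. The substitution `s = m + B u` carries `N(m, S)` to the standard Gaussian,
under which `u ↦ (Bᵀ w) ⬝ u` is a centred real Gaussian of variance `wᵀ S w`; hence the
half-space `{w ⬝ s ≤ T}` has probability `Φ((T - w ⬝ m) / √(wᵀ S w))`. As `Φ` is strictly
increasing, the constraint on the mean shift is the linear condition
`w ⬝ Δ ≤ -(z - δ₀) √(wᵀ S w)`, and Cauchy–Schwarz for the inner product `xᵀ S⁻¹ y`,
`(w ⬝ Δ)² ≤ (wᵀ S w)(Δᵀ S⁻¹ Δ)`, bounds `Δᵀ S⁻¹ Δ` below by `(z - δ₀)²`, with equality for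
`Δ` parallel to `S w`.
-/

open ProbabilityTheory

lemma stdNormalCDF_eq_gaussianReal_real_Iic (x : ℝ) :
    stdNormalCDF x = (gaussianReal 0 1).real (Set.Iic x) := by
  rw [measureReal_def, gaussianReal_apply_eq_integral 0 one_ne_zero, ENNReal.toReal_ofReal
    (setIntegral_nonneg measurableSet_Iic fun t _ => gaussianPDFReal_nonneg 0 1 t)]
  simp [stdNormalCDF, gaussianPDFReal, neg_div]

lemma stdNormalCDF_strictMono : StrictMono stdNormalCDF := by
  intro x y hxy
  have hpos : 0 < (gaussianReal 0 1).real (Set.Ioc x y) := by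
    refine ENNReal.toReal_pos (fun h => ?_) (measure_ne_top _ _)
    have := gaussianReal_absolutelyContinuous' 0 one_ne_zero h
    exact hxy.not_ge (by simpa using this)
  rw [stdNormalCDF_eq_gaussianReal_real_Iic, stdNormalCDF_eq_gaussianReal_real_Iic,
    ← Set.Iic_union_Ioc_eq_Iic hxy.le,
    measureReal_union (Set.Iic_disjoint_Ioc le_rfl) measurableSet_Ioc]
  linarith

lemma gaussianReal_real_Iic {σ : ℝ} (hσ : 0 < σ) (c : ℝ) :
    (gaussianReal 0 (σ ^ 2).toNNReal).real (Set.Iic c) = stdNormalCDF (c / σ) := by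
  have hscale := gaussianReal_map_const_mul (μ := 0) (v := 1) σ
  rw [mul_zero, mul_one] at hscale
  have hpre : (σ * ·) ⁻¹' Set.Iic c = Set.Iic (c / σ) := by
    ext t
    simp [le_div_iff₀ hσ, mul_comm]
  rw [Real.toNNReal_of_nonneg (sq_nonneg σ), ← hscale,
    map_measureReal_apply (measurable_const_mul σ) measurableSet_Iic, hpre,
    stdNormalCDF_eq_gaussianReal_real_Iic]

lemma pi_gaussianReal_eq_withDensity {ι : Type*} [Fintype ι] :
    Measure.pi (fun _ : ι => gaussianReal 0 1) =
      volume.withDensity fun u => ENNReal.ofReal (∏ i, gaussianPDFReal 0 1 (u i)) := by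
  have hint : Integrable (fun u : ι → ℝ => ∏ i, gaussianPDFReal 0 1 (u i)) :=
    Integrable.fintype_prod fun _ => integrable_gaussianPDFReal 0 1
  refine Measure.pi_eq fun s hs => ?_
  rw [withDensity_apply _ (MeasurableSet.univ_pi hs),
    ← ofReal_integral_eq_lintegral_ofReal hint.restrict
      (ae_of_all _ fun u => Finset.prod_nonneg fun i _ => gaussianPDFReal_nonneg 0 1 (u i)),
    volume_pi, Measure.restrict_pi_pi,
    integral_fintype_prod_eq_prod (f := fun _ => gaussianPDFReal 0 1),
    ENNReal.ofReal_prod_of_nonneg fun i _ =>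
      setIntegral_nonneg (hs i) fun x _ => gaussianPDFReal_nonneg 0 1 x]
  exact Finset.prod_congr rfl fun i _ => (gaussianReal_apply_eq_integral 0 one_ne_zero (s i)).symm

open WithLp in
lemma map_dotProduct_pi_gaussianReal {ι : Type*} [Fintype ι] (v : ι → ℝ) :
    (Measure.pi fun _ : ι => gaussianReal 0 1).map (v ⬝ᵥ ·) =
      gaussianReal 0 (v ⬝ᵥ v).toNNReal := by
  have h : (v ⬝ᵥ ·) = innerSL ℝ (toLp 2 v) ∘ toLp 2 := by
    funext u
    simp [PiLp.inner_apply, dotProduct, mul_comm]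
  rw [h, ← Measure.map_map (by fun_prop) (by fun_prop), map_pi_eq_stdGaussian,
    IsGaussian.map_eq_gaussianReal, integral_strongDual_stdGaussian, variance_dual_stdGaussian,
    innerSL_apply_norm, EuclideanSpace.real_norm_sq_eq]
  simp [dotProduct, sq]

lemma gaussDensity_zero_one_eq_prod {d : ℕ} (u : Fin d → ℝ) :
    gaussDensity 0 1 u = ∏ i, gaussianPDFReal 0 1 (u i) := by
  have hsqrt : √((2 * π) ^ d) = √(2 * π) ^ d := by
    rw [← Real.sqrt_sq (by positivity : 0 ≤ √(2 * π) ^ d), pow_right_comm,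
      Real.sq_sqrt (by positivity)]
  simp only [gaussDensity, gaussianPDFReal, det_one, inv_one, mul_one, sub_zero, one_mulVec,
    NNReal.coe_one, Finset.prod_mul_distrib, Finset.prod_const, Finset.card_univ,
    Fintype.card_fin, ← Real.exp_sum, hsqrt, inv_pow, dotProduct, Finset.mul_sum]
  congr 2
  exact Finset.sum_congr rfl fun i _ => by ring

lemma setIntegral_gaussDensity_zero_one_dotProduct_le {d : ℕ} {v : Fin d → ℝ} (hv : v ≠ 0)
    (c : ℝ) :
    ∫ u in {u | v ⬝ᵥ u ≤ c}, gaussDensity 0 1 u = stdNormalCDF (c / √(v ⬝ᵥ v)) := by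
  have hvv : 0 < v ⬝ᵥ v := by simpa using dotProduct_self_star_pos_iff.2 hv
  have hH : MeasurableSet {u | v ⬝ᵥ u ≤ c} := measurableSet_le (by fun_prop) measurable_const
  have hnonneg : ∀ u : Fin d → ℝ, 0 ≤ ∏ i, gaussianPDFReal 0 1 (u i) :=
    fun u => Finset.prod_nonneg fun i _ => gaussianPDFReal_nonneg 0 1 (u i)
  have hint : Integrable fun u : Fin d → ℝ => ∏ i, gaussianPDFReal 0 1 (u i) :=
    Integrable.fintype_prod fun _ => integrable_gaussianPDFReal 0 1
  have hlaw := gaussianReal_real_Iic (Real.sqrt_pos.2 hvv) c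
  rw [Real.sq_sqrt hvv.le] at hlaw
  calc ∫ u in {u | v ⬝ᵥ u ≤ c}, gaussDensity 0 1 u
      = (Measure.pi fun _ : Fin d => gaussianReal 0 1).real {u | v ⬝ᵥ u ≤ c} := by
        rw [pi_gaussianReal_eq_withDensity, measureReal_def, withDensity_apply _ hH,
          ← ofReal_integral_eq_lintegral_ofReal hint.restrict (ae_of_all _ hnonneg),
          ENNReal.toReal_ofReal (setIntegral_nonneg hH fun u _ => hnonneg u)]
        simp_rw [gaussDensity_zero_one_eq_prod]
    _ = ((Measure.pi fun _ : Fin d => gaussianReal 0 1).map (v ⬝ᵥ ·)).real (Set.Iic c) :=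
        (map_measureReal_apply (f := (v ⬝ᵥ ·)) (by fun_prop) measurableSet_Iic).symm
    _ = stdNormalCDF (c / √(v ⬝ᵥ v)) := by rw [map_dotProduct_pi_gaussianReal, hlaw]

lemma integral_comp_add_mulVec {ι : Type*} [Fintype ι] [DecidableEq ι] {B : Matrix ι ι ℝ}
    (hB : B.det ≠ 0) (m : ι → ℝ) (f : (ι → ℝ) → ℝ) :
    ∫ u, f (m + B *ᵥ u) = |B.det|⁻¹ * ∫ s, f s := by
  have hemb : MeasurableEmbedding (toLin' B) :=
    (B.toLinearEquiv' (B.invertibleOfIsUnitDet hB.isUnit)).toContinuousLinearEquiv.toHomeomorph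
      |>.measurableEmbedding
  simp_rw [← toLin'_apply B]
  rw [← hemb.integral_map (fun x => f (m + x)), map_matrix_volume_pi_eq_smul_volume_pi hB,
    integral_smul_measure, integral_add_left_eq_self, abs_inv,
    ENNReal.toReal_ofReal (by positivity), smul_eq_mul]

lemma gaussDensity_mul_transpose_add_mulVec {d : ℕ} (m : Fin d → ℝ)
    {B : Matrix (Fin d) (Fin d) ℝ} (hB : B.det ≠ 0) (u : Fin d → ℝ) :
    gaussDensity m (B * Bᵀ) (m + B *ᵥ u) = |B.det|⁻¹ * gaussDensity 0 1 u := by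
  have hquad : (B *ᵥ u) ⬝ᵥ ((B * Bᵀ)⁻¹ *ᵥ (B *ᵥ u)) = u ⬝ᵥ u := by
    rw [Matrix.mul_inv_rev, mulVec_mulVec, Matrix.mul_assoc, nonsing_inv_mul _ hB.isUnit,
      Matrix.mul_one, ← transpose_nonsing_inv, dotProduct_mulVec, vecMul_transpose,
      mulVec_mulVec, nonsing_inv_mul _ hB.isUnit, one_mulVec]
  have hdet : √((2 * π) ^ d * (B * Bᵀ).det) = √((2 * π) ^ d) * |B.det| := by
    rw [det_mul, det_transpose, Real.sqrt_mul (by positivity), Real.sqrt_mul_self_eq_abs]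
  simp only [gaussDensity, add_sub_cancel_left, sub_zero, hquad, hdet, det_one, mul_one, inv_one,
    one_mulVec, mul_inv]
  ring

open scoped MatrixOrder in
lemma Matrix.PosDef.exists_mul_transpose_eq {n : Type*} [Fintype n] [DecidableEq n]
    {S : Matrix n n ℝ} (hS : S.PosDef) : ∃ B : Matrix n n ℝ, B.det ≠ 0 ∧ B * Bᵀ = S := by
  have hsqrt : CFC.sqrt S * CFC.sqrt S = S := CFC.sqrt_mul_sqrt_self S hS.posSemidef.nonneg
  have hsymm : (CFC.sqrt S)ᵀ = CFC.sqrt S :=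
    IsSymm.eq (by simpa using (CFC.sqrt_nonneg S).posSemidef.1)
  refine ⟨CFC.sqrt S, fun h => hS.det_pos.ne' ?_, by rw [hsymm, hsqrt]⟩
  rw [← hsqrt, det_mul, h, zero_mul]

theorem setIntegral_gaussDensity_dotProduct_le {d : ℕ} (m : Fin d → ℝ)
    {S : Matrix (Fin d) (Fin d) ℝ} (hS : S.PosDef) {w : Fin d → ℝ} (hw : w ≠ 0) (T : ℝ) :
    ∫ s in {s | w ⬝ᵥ s ≤ T}, gaussDensity m S s =
      stdNormalCDF ((T - w ⬝ᵥ m) / √(w ⬝ᵥ (S *ᵥ w))) := by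
  have hSw : 0 < w ⬝ᵥ (S *ᵥ w) := by simpa using hS.dotProduct_mulVec_pos hw
  obtain ⟨B, hB, rfl⟩ := hS.exists_mul_transpose_eq
  set v := Bᵀ *ᵥ w
  have hvw : ∀ u, w ⬝ᵥ (B *ᵥ u) = v ⬝ᵥ u := fun u => by
    rw [dotProduct_mulVec, ← mulVec_transpose]
  have hvv : v ⬝ᵥ v = w ⬝ᵥ ((B * Bᵀ) *ᵥ w) := by rw [← hvw, mulVec_mulVec]
  have hv : v ≠ 0 := fun h => by simp [← hvv, h] at hSw
  set H := {s | w ⬝ᵥ s ≤ T}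
  set H' := {u | v ⬝ᵥ u ≤ T - w ⬝ᵥ m}
  have hH : MeasurableSet H := measurableSet_le (by fun_prop) measurable_const
  have hH' : MeasurableSet H' := measurableSet_le (by fun_prop) measurable_const
  have hpre : ∀ u, m + B *ᵥ u ∈ H ↔ u ∈ H' := fun u => by
    change w ⬝ᵥ (m + B *ᵥ u) ≤ T ↔ v ⬝ᵥ u ≤ T - w ⬝ᵥ m
    rw [dotProduct_add, hvw, le_sub_iff_add_le']
  calc ∫ s in H, gaussDensity m (B * Bᵀ) s
      = |B.det| * ∫ u, H.indicator (gaussDensity m (B * Bᵀ)) (m + B *ᵥ u) := by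
        rw [integral_comp_add_mulVec hB, ← integral_indicator hH,
          mul_inv_cancel_left₀ (abs_ne_zero.2 hB)]
    _ = ∫ u in H', gaussDensity 0 1 u := by
        rw [← integral_indicator hH', ← integral_const_mul]
        congr 1 with u
        by_cases hu : u ∈ H'
        · rw [Set.indicator_of_mem hu, Set.indicator_of_mem ((hpre u).2 hu),
            gaussDensity_mul_transpose_add_mulVec m hB, mul_inv_cancel_left₀ (abs_ne_zero.2 hB)]
        · rw [Set.indicator_of_notMem hu, Set.indicator_of_notMem (mt (hpre u).1 hu), mul_zero]
    _ = stdNormalCDF ((T - w ⬝ᵥ m) / √(w ⬝ᵥ ((B * Bᵀ) *ᵥ w))) := by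
        rw [setIntegral_gaussDensity_zero_one_dotProduct_le hv, hvv]

lemma Matrix.PosDef.sq_dotProduct_le {n : Type*} [Fintype n] [DecidableEq n]
    {S : Matrix n n ℝ} (hS : S.PosDef) (w Δ : n → ℝ) :
    (w ⬝ᵥ Δ) ^ 2 ≤ (w ⬝ᵥ (S *ᵥ w)) * (Δ ⬝ᵥ (S⁻¹ *ᵥ Δ)) := by
  have hSS : S⁻¹ *ᵥ (S *ᵥ w) = w := by
    rw [mulVec_mulVec, nonsing_inv_mul _ hS.det_pos.ne'.isUnit, one_mulVec]
  have hST : Sᵀ = S := IsSymm.eq (by simpa using hS.isHermitian)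
  have hsymm : (S *ᵥ w) ⬝ᵥ (S⁻¹ *ᵥ Δ) = w ⬝ᵥ Δ := by
    rw [dotProduct_mulVec, ← mulVec_transpose, transpose_nonsing_inv, hST, hSS]
  -- the quadratic `t ↦ (Δ - t • S w)ᵀ S⁻¹ (Δ - t • S w)` is nonnegative
  have hquad : ∀ t : ℝ,
      0 ≤ (w ⬝ᵥ (S *ᵥ w)) * (t * t) + (-2 * (w ⬝ᵥ Δ)) * t + Δ ⬝ᵥ (S⁻¹ *ᵥ Δ) := by
    intro t
    have := hS.inv.posSemidef.dotProduct_mulVec_nonneg (Δ - t • S *ᵥ w)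
    simp only [star_trivial, mulVec_sub, mulVec_smul, hSS, dotProduct_sub, sub_dotProduct,
      dotProduct_smul, smul_dotProduct, hsymm, smul_eq_mul, dotProduct_comm Δ w,
      dotProduct_comm (S *ᵥ w) w] at this
    linear_combination this
  have hdiscrim := discrim_le_zero hquad
  rw [discrim] at hdiscrim
  linarith

lemma Matrix.PosDef.sq_le_dotProduct_inv_mulVec {n : Type*} [Fintype n] [DecidableEq n]
    {S : Matrix n n ℝ} (hS : S.PosDef) {w Δ : n → ℝ} (hw : w ≠ 0) {r : ℝ} (hr : 0 ≤ r)
    (hΔ : w ⬝ᵥ Δ ≤ -r * √(w ⬝ᵥ (S *ᵥ w))) : r ^ 2 ≤ Δ ⬝ᵥ (S⁻¹ *ᵥ Δ) := by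
  have hSw : 0 < w ⬝ᵥ (S *ᵥ w) := by simpa using hS.dotProduct_mulVec_pos hw
  have hsq : (r * √(w ⬝ᵥ (S *ᵥ w))) ^ 2 ≤ (w ⬝ᵥ Δ) ^ 2 := by
    rw [← neg_sq (w ⬝ᵥ Δ)]
    exact pow_le_pow_left₀ (by positivity) (by linarith) 2
  rw [mul_pow, Real.sq_sqrt hSw.le] at hsq
  exact le_of_mul_le_mul_right (by linarith [hS.sq_dotProduct_le w Δ]) hSw

lemma smul_mulVec_dotProduct_inv_mulVec {n : Type*} [Fintype n] [DecidableEq n]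
    {S : Matrix n n ℝ} (hS : IsUnit S.det) (t : ℝ) (w : n → ℝ) :
    (t • S *ᵥ w) ⬝ᵥ (S⁻¹ *ᵥ (t • S *ᵥ w)) = t ^ 2 * (w ⬝ᵥ (S *ᵥ w)) := by
  rw [mulVec_smul, mulVec_mulVec, nonsing_inv_mul _ hS, one_mulVec, smul_dotProduct,
    dotProduct_smul, dotProduct_comm, smul_eq_mul, smul_eq_mul, ← mul_assoc, sq]

theorem halfspace_optimal_mean_shift_general {d : ℕ}
    (μ₀ : Fin d → ℝ) (S0 : Matrix (Fin d) (Fin d) ℝ) (hS0 : S0.PosDef)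
    (w : Fin d → ℝ) (hw : w ≠ 0) (T : ℝ)
    (ε : ℝ)
    (z : ℝ) (hz : stdNormalCDF z = 1 - ε)
    (δ₀ : ℝ) (hδ₀ : δ₀ = (T - w ⬝ᵥ μ₀) / Real.sqrt (w ⬝ᵥ (S0 *ᵥ w)))
    (hfar : δ₀ < z)
    (Δstar : Fin d → ℝ)
    (hΔstar : Δstar = (-(z - δ₀) / Real.sqrt (w ⬝ᵥ (S0 *ᵥ w))) • (S0 *ᵥ w)) :
    IsLeast {x : ℝ | ∃ Δ : Fin d → ℝ,
        (1 - ε ≤ ∫ s in {s : Fin d → ℝ | w ⬝ᵥ s ≤ T}, gaussDensity (μ₀ + Δ) S0 s) ∧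
        x = (1 / 2) * (Δ ⬝ᵥ (S0⁻¹ *ᵥ Δ))}
      ((1 / 2) * (z - δ₀) ^ 2) ∧
    (1 - ε ≤ ∫ s in {s : Fin d → ℝ | w ⬝ᵥ s ≤ T}, gaussDensity (μ₀ + Δstar) S0 s) ∧
    (1 / 2) * (Δstar ⬝ᵥ (S0⁻¹ *ᵥ Δstar)) = (1 / 2) * (z - δ₀) ^ 2 := by
  have hSw : 0 < w ⬝ᵥ (S0 *ᵥ w) := by simpa using hS0.dotProduct_mulVec_pos hw
  set σ := √(w ⬝ᵥ (S0 *ᵥ w))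
  have hσ : 0 < σ := Real.sqrt_pos.2 hSw
  have hσsq : σ ^ 2 = w ⬝ᵥ (S0 *ᵥ w) := Real.sq_sqrt hSw.le
  have hTμ : T - w ⬝ᵥ μ₀ = δ₀ * σ := by rw [hδ₀, div_mul_cancel₀ _ hσ.ne']
  have hfeasible : ∀ Δ, 1 - ε ≤ ∫ s in {s | w ⬝ᵥ s ≤ T}, gaussDensity (μ₀ + Δ) S0 s ↔
      w ⬝ᵥ Δ ≤ -(z - δ₀) * σ := fun Δ => by
    rw [setIntegral_gaussDensity_dotProduct_le _ hS0 hw, ← hz, stdNormalCDF_strictMono.le_iff_le,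
      le_div_iff₀ hσ, dotProduct_add]
    constructor <;> intro h <;> linarith
  have hstar_dot : w ⬝ᵥ Δstar = -(z - δ₀) * σ := by
    rw [hΔstar, dotProduct_smul, smul_eq_mul, ← hσsq]
    field_simp
  have hstar_kl : Δstar ⬝ᵥ (S0⁻¹ *ᵥ Δstar) = (z - δ₀) ^ 2 := by
    rw [hΔstar, smul_mulVec_dotProduct_inv_mulVec hS0.det_pos.ne'.isUnit, div_pow, hσsq, neg_sq]
    field_simp
  have hstar_feasible := (hfeasible Δstar).2 hstar_dot.le
  refine ⟨⟨⟨Δstar, hstar_feasible, by rw [hstar_kl]⟩, ?_⟩, hstar_feasible, by rw [hstar_kl]⟩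
  rintro _ ⟨Δ, hΔ, rfl⟩
  linarith [hS0.sq_le_dotProduct_inv_mulVec hw (sub_pos.2 hfar).le ((hfeasible Δ).1 hΔ)]

/-- optimal mean shift for resolving a half-space under a Gaussian
posterior family with fixed covariance.  Here `z = Φ⁻¹(1-ε)`. -/
theorem halfspace_optimal_mean_shift {d : ℕ}
    (μ₀ : Fin d → ℝ) (S0 : Matrix (Fin d) (Fin d) ℝ) (hS0 : S0.PosDef)
    (w : Fin d → ℝ) (hw : w ≠ 0) (T : ℝ)
    (ε : ℝ) (hε0 : 0 < ε) (hε : ε < 1 / 2)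
    (z : ℝ) (hz : stdNormalCDF z = 1 - ε)
    (δ₀ : ℝ) (hδ₀ : δ₀ = (T - w ⬝ᵥ μ₀) / Real.sqrt (w ⬝ᵥ (S0 *ᵥ w)))
    (hfar : δ₀ < z)
    (Δstar : Fin d → ℝ)
    (hΔstar : Δstar = (-(z - δ₀) / Real.sqrt (w ⬝ᵥ (S0 *ᵥ w))) • (S0 *ᵥ w)) :
    IsLeast {x : ℝ | ∃ Δ : Fin d → ℝ,
        (1 - ε ≤ ∫ s in {s : Fin d → ℝ | w ⬝ᵥ s ≤ T}, gaussDensity (μ₀ + Δ) S0 s) ∧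
        x = (1 / 2) * (Δ ⬝ᵥ (S0⁻¹ *ᵥ Δ))}
      ((1 / 2) * (z - δ₀) ^ 2) ∧
    (1 - ε ≤ ∫ s in {s : Fin d → ℝ | w ⬝ᵥ s ≤ T}, gaussDensity (μ₀ + Δstar) S0 s) ∧
    (1 / 2) * (Δstar ⬝ᵥ (S0⁻¹ *ᵥ Δstar)) = (1 / 2) * (z - δ₀) ^ 2 :=
  halfspace_optimal_mean_shift_general μ₀ S0 hS0 w hw T ε z hz δ₀ hδ₀ hfar Δstar hΔstar
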